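/- Let β > 0 and 0 ≤ h < (1/2)·ln(2+√3). Then the function Γ_{β,h} is strictly concave on the open interval (0, +∞). -/

import Mathlib

/-!
Γ'' is `-(2β/3)` times `tanh u sech² u + tanh v sech² v` with `u = x + h`, `v = x - h`.
Clearing the positive denominators, this is `sinh u cosh³ v + sinh v cosh³ u`, which factors as
`sinh (u + v) · (1 + sinh u sinh v cosh (u - v))`. Here `sinh (u + v) = sinh 2x > 0`, and since
`2 sinh u sinh v = cosh (u + v) - cosh (u - v) ≥ 1 - c` with `c = cosh 2h`, the second factor is
at least `(2 - c)(1 + c)/2`, which is positive exactly when `cosh 2h < 2`, i.e.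
`2h < arcosh 2 = log (2 + √3)`.
-/

open Real Set

lemma strictConcaveOn_of_hasDerivAt2_neg {D : Set ℝ} (hD : Convex ℝ D) (hD_open : IsOpen D)
    {f f' f'' : ℝ → ℝ} (hf : ∀ x ∈ D, HasDerivAt f (f' x) x)
    (hf' : ∀ x ∈ D, HasDerivAt f' (f'' x) x) (hf''_neg : ∀ x ∈ D, f'' x < 0) :
    StrictConcaveOn ℝ D f := by
  have h_anti : StrictAntiOn f' D :=
    strictAntiOn_of_hasDerivWithinAt_neg hD
      (fun x hx => (hf' x hx).continuousAt.continuousWithinAt)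
      (fun x hx => (hf' x (interior_subset hx)).hasDerivWithinAt)
      (fun x hx => hf''_neg x (interior_subset hx))
  refine StrictAntiOn.strictConcaveOn_of_deriv hD
    (fun x hx => (hf x hx).continuousAt.continuousWithinAt) ?_
  rw [hD_open.interior_eq]
  exact h_anti.congr fun x hx => ((hf x hx).deriv).symm

namespace Real

lemma hasDerivAt_tanh (x : ℝ) : HasDerivAt tanh (cosh x ^ 2)⁻¹ x := by
  have hcosh := (cosh_pos x).ne'
  rw [show tanh = fun y => sinh y / cosh y from funext tanh_eq_sinh_div_cosh]
  refine ((hasDerivAt_sinh x).div (hasDerivAt_cosh x) hcosh).congr_deriv ?_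
  field_simp
  linear_combination cosh_sq' x

lemma hasDerivAt_inv_cosh_sq (x : ℝ) :
    HasDerivAt (fun y => (cosh y ^ 2)⁻¹) (-2 * (sinh x / cosh x ^ 3)) x := by
  have hcosh := (cosh_pos x).ne'
  refine (((hasDerivAt_cosh x).fun_pow 2).inv (pow_ne_zero 2 hcosh)).congr_deriv ?_
  field_simp
  ring

lemma cosh_lt_of_abs_lt_arcosh {t y : ℝ} (hy : 1 ≤ y) (ht : |t| < arcosh y) : cosh t < y := by
  rw [← cosh_arcosh hy, cosh_lt_cosh, abs_of_nonneg (arcosh_nonneg hy)]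
  exact ht

lemma arcosh_two : arcosh 2 = log (2 + √3) := by
  norm_num [arcosh]

lemma sinh_mul_cosh_pow_three_add_sinh_mul_cosh_pow_three (u v : ℝ) :
    sinh u * cosh v ^ 3 + sinh v * cosh u ^ 3 =
      sinh (u + v) * (1 + sinh u * sinh v * cosh (u - v)) := by
  rw [sinh_add, cosh_sub]
  linear_combination (sinh v * cosh u - sinh u * sinh v ^ 2 * cosh v) * cosh_sq u +
    (sinh u * cosh v - sinh u ^ 2 * sinh v * cosh u) * cosh_sq v

lemma one_add_sinh_mul_sinh_mul_cosh_sub_pos {u v : ℝ} (h : cosh (u - v) < 2) :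
    0 < 1 + sinh u * sinh v * cosh (u - v) := by
  have h_prod : 2 * (sinh u * sinh v) = cosh (u + v) - cosh (u - v) := by
    rw [cosh_add, cosh_sub]
    ring
  have h_lower : 1 - cosh (u - v) ≤ 2 * (sinh u * sinh v) := by
    linarith [one_le_cosh (u + v)]
  nlinarith [mul_le_mul_of_nonneg_right h_lower (cosh_pos (u - v)).le,
    mul_pos (sub_pos.2 h) (add_pos one_pos (cosh_pos (u - v)))]

lemma sinh_div_cosh_pow_three_add_pos {u v : ℝ} (huv : 0 < u + v) (h : cosh (u - v) < 2) :
    0 < sinh u / cosh u ^ 3 + sinh v / cosh v ^ 3 := by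
  have hcu := cosh_pos u
  have hcv := cosh_pos v
  rw [div_add_div _ _ (by positivity) (by positivity), mul_comm (cosh u ^ 3),
    sinh_mul_cosh_pow_three_add_sinh_mul_cosh_pow_three]
  exact div_pos (mul_pos (sinh_pos_iff.2 huv) (one_add_sinh_mul_sinh_mul_cosh_sub_pos h))
    (by positivity)

end Real

/-- For `β > 0` and `0 ≤ h < (1/2)ln(2+√3)`, the function
`Γ_{β,h}(x) = (β/3)(tanh(x+h) + tanh(x−h))` is strictly concave on `(0, ∞)`. -/
theorem gamma_strictConcave_small_disorder (β h : ℝ) (hβ : 0 < β) (hh : 0 ≤ h)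
    (hh' : h < 1 / 2 * Real.log (2 + Real.sqrt 3))
    (Γ : ℝ → ℝ)
    (hΓ : ∀ x, Γ x = β / 3 * (Real.tanh (x + h) + Real.tanh (x - h))) :
    StrictConcaveOn ℝ (Set.Ioi (0 : ℝ)) Γ := by
  obtain rfl : Γ = fun x => β / 3 * (tanh (x + h) + tanh (x - h)) := funext hΓ
  have h_cosh : cosh (2 * h) < 2 := by
    refine cosh_lt_of_abs_lt_arcosh one_le_two ?_
    rw [abs_of_nonneg (by positivity), arcosh_two]
    linarith
  refine strictConcaveOn_of_hasDerivAt2_neg (convex_Ioi 0) isOpen_Ioi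
    (fun x _ => (((hasDerivAt_tanh (x + h)).comp_add_const x h).add
      ((hasDerivAt_tanh (x - h)).comp_sub_const x h)).const_mul (β / 3))
    (fun x _ => (((hasDerivAt_inv_cosh_sq (x + h)).comp_add_const x h).add
      ((hasDerivAt_inv_cosh_sq (x - h)).comp_sub_const x h)).const_mul (β / 3))
    fun x hx => ?_
  have h_pos := sinh_div_cosh_pow_three_add_pos (u := x + h) (v := x - h)
    (by linarith [mem_Ioi.1 hx]) (by rwa [show x + h - (x - h) = 2 * h by ring])
  nlinarith
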